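/- arXiv:1808.09695 — 2 statements merged into one kernel-verified Lean document; each statement's English description precedes it below -/
import Mathlib

section
/- Let G be an abelian group, E a closed set in an open domain U ⊂ ℝⁿ, and B' a convex set with cl(B') ⊂ U. If {F_j} is a sequence of d-dimensional G-topological competitors of E in B' and F_j converges to a closed set F in Hausdorff distance, then for every convex set B with cl(B') ⊂ B ⊂ cl(B) ⊂ U, the set F is a G-topological competitor of dimension d of E in B. -/
open Set MeasureTheory Metric Filter CategoryTheory MonoidalCategory
open scoped NNReal ENNReal

noncomputable section

/-- `Euc n` is the Euclidean space `ℝⁿ`. -/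
abbrev Euc (n : ℕ) := EuclideanSpace ℝ (Fin n)

/-- `f` is (the time-1 map of) a deformation in `U`: there is a one-parameter family `φ t`
of continuous self-maps of `U` starting from the identity, depending continuously on `(t,x)`,
whose time-1 map is Lipschitz, and which moves points only inside a relatively
compact subset of `U`; `f` agrees with the time-1 map on `U`. -/
def IsDeformationIn {n : ℕ} (U : Set (Euc n)) (f : Euc n → Euc n) : Prop :=
  ∃ φ : ℝ → Euc n → Euc n,
    (∀ t ∈ Icc (0:ℝ) 1, MapsTo (φ t) U U) ∧
    (∀ x ∈ U, φ 0 x = x) ∧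
    ContinuousOn (fun p : ℝ × Euc n => φ p.1 p.2) (Icc (0:ℝ) 1 ×ˢ U) ∧
    (∃ L : ℝ≥0, LipschitzOnWith L (φ 1) U) ∧
    (∃ K : Set (Euc n), IsCompact K ∧ K ⊆ U ∧
      (⋃ t ∈ Icc (0:ℝ) 1, ({x ∈ U | φ t x ≠ x} ∪ φ t '' {x ∈ U | φ t x ≠ x})) ⊆ K) ∧
    EqOn f (φ 1) U

/-- The class `F(E,U)` of deformations of `E` in `U`. -/
def DeformClass {n : ℕ} (E U : Set (Euc n)) : Set (Set (Euc n)) :=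
  {F | ∃ f, IsDeformationIn U f ∧ F = (E \ U) ∪ f '' (E ∩ U)}

/-- Convergence of a sequence of sets to `F` in local Hausdorff distance:
on every compact set `K`, the (one-sided) Hausdorff excesses tend to `0`. -/
def LocHausdorffTendsto {n : ℕ} (E : ℕ → Set (Euc n)) (F : Set (Euc n)) : Prop :=
  ∀ K : Set (Euc n), IsCompact K →
    Tendsto (fun j => (⨆ y ∈ E j ∩ K, EMetric.infEdist y F) ⊔
      ⨆ y ∈ F ∩ K, EMetric.infEdist y (E j)) atTop (nhds 0)

/-- `F` has locally finite `d`-dimensional Hausdorff measure. -/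
def LocallyHFinite {n : ℕ} (d : ℕ) (F : Set (Euc n)) : Prop :=
  ∀ (x : Euc n) (r : ℝ), μH[(d:ℝ)] (F ∩ closedBall x r) < ⊤

/-- The class `F̄(E,U)`: closed subsets of `cl U` with locally finite `H^d` measure, which are
local-Hausdorff limits of sequences of deformations of `E` in `U`, and which carry no
`H^d` measure on `∂U \ E`. -/
def DeformClosure {n : ℕ} (d : ℕ) (E U : Set (Euc n)) : Set (Set (Euc n)) :=
  {F | IsClosed F ∧ F ⊆ closure U ∧
    (∃ Ej : ℕ → Set (Euc n), (∀ j, Ej j ∈ DeformClass E U) ∧ LocHausdorffTendsto Ej F) ∧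
    LocallyHFinite d F ∧ μH[(d:ℝ)] ((F ∩ frontier U) \ E) = 0}

/-- `E` is Almgren minimal of dimension `d` in `U` (for a set `E ⊆ ℝⁿ`, this is minimality
of `E ∩ U`): finite `H^d` measure on compact balls of `U`, and no deformation in `U`
decreases the measure. -/
def AlmgrenMinimalIn {n : ℕ} (d : ℕ) (U E : Set (Euc n)) : Prop :=
  (∀ (x : Euc n) (r : ℝ), closedBall x r ⊆ U → μH[(d:ℝ)] (E ∩ closedBall x r) < ⊤) ∧
  ∀ f, IsDeformationIn U f →
    μH[(d:ℝ)] ((E ∩ U) \ f '' (E ∩ U)) ≤ μH[(d:ℝ)] (f '' (E ∩ U) \ (E ∩ U))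

/-- `E` is reduced (for dimension `d`): it coincides with the closed support of `H^d ⌊ E`. -/
def IsReducedSet {n : ℕ} (d : ℕ) (E : Set (Euc n)) : Prop :=
  E = {x ∈ E | ∀ r > 0, 0 < μH[(d:ℝ)] (E ∩ ball x r)}

/-- The singular chain complex functor with coefficients in the abelian group `G`
(chains are free `ℤ`-modules on singular simplices, tensored with `G`). -/
def singularChainsFunctor (G : Type) [AddCommGroup G] :
    TopCat.{0} ⥤ ChainComplex (ModuleCat.{0} ℤ) ℕ :=
  TopCat.toSSet ⋙
    (SimplicialObject.whiskering _ _).obj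
      (ModuleCat.free ℤ ⋙ tensorRight (ModuleCat.of ℤ G)) ⋙
    AlgebraicTopology.alternatingFaceMapComplex _

/-- The `k`-th singular homology functor with coefficients in `G`. -/
def singularHomologyFunctor (G : Type) [AddCommGroup G] (k : ℕ) :
    TopCat.{0} ⥤ ModuleCat.{0} ℤ :=
  singularChainsFunctor G ⋙ HomologicalComplex.homologyFunctor _ _ k

/-- `S` represents a nonzero element of `H_k(V; G)`: the map induced by the inclusion
`S ⊆ V` on `k`-th singular homology with coefficients in `G` is injective.
(For a `k`-sphere `S`, this says exactly that no nonzero multiple of its fundamental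
class dies in `V`; for `k = 0` it says the two points lie in different components.) -/
def SphereNontrivialIn (G : Type) [AddCommGroup G] (k : ℕ) {X : Type} [TopologicalSpace X]
    (S V : Set X) (h : S ⊆ V) : Prop :=
  Function.Injective
    ((singularHomologyFunctor G k).map
      (TopCat.ofHom ⟨Set.inclusion h, continuous_inclusion h⟩ : TopCat.of S ⟶ TopCat.of V))

/-- `S` is a euclidean `k`-sphere in `ℝⁿ`: a round sphere of positive radius inside a
`(k+1)`-dimensional affine subspace. -/
def IsEuclideanSphere {n : ℕ} (k : ℕ) (S : Set (Euc n)) : Prop :=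
  ∃ (W : AffineSubspace ℝ (Euc n)) (x : Euc n) (r : ℝ), 0 < r ∧ x ∈ W ∧
    Module.finrank ℝ W.direction = k + 1 ∧ S = {y : Euc n | y ∈ W ∧ dist y x = r}

/-- `F` is a `G`-topological competitor of dimension `d` of `E` in the convex set `B`
(inside the open set `U`): `F` is closed, agrees with `E` outside `B`, and every euclidean
`(n-d-1)`-sphere of `U \ (B ∪ E)` representing a nonzero element of `H_{n-d-1}(U \ E; G)`
also represents a nonzero element of `H_{n-d-1}(U \ F; G)`. -/
def TopCompetitorIn (G : Type) [AddCommGroup G] {n : ℕ} (d : ℕ)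
    (U B E F : Set (Euc n)) : Prop :=
  IsClosed F ∧ Convex ℝ B ∧ closure B ⊆ U ∧ F \ B = E \ B ∧
  ∀ S : Set (Euc n), IsEuclideanSphere (n - d - 1) S → S ⊆ U \ (B ∪ E) →
    ∀ (hE : S ⊆ U \ E) (hF : S ⊆ U \ F),
      SphereNontrivialIn G (n - d - 1) S (U \ E) hE →
      SphereNontrivialIn G (n - d - 1) S (U \ F) hF

/-- `F` is a `G`-topological competitor of dimension `d` of `E` in the open set `U`. -/
def TopCompetitor (G : Type) [AddCommGroup G] {n : ℕ} (d : ℕ)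
    (U E F : Set (Euc n)) : Prop :=
  ∃ B, TopCompetitorIn G d U B E F

/-- `E` is `G`-topologically minimal of dimension `d` in `U`. -/
def TopMinimalIn (G : Type) [AddCommGroup G] {n : ℕ} (d : ℕ) (U E : Set (Euc n)) : Prop :=
  (∀ (x : Euc n) (r : ℝ), closedBall x r ⊆ U → μH[(d:ℝ)] (E ∩ closedBall x r) < ⊤) ∧
  ∀ F, TopCompetitor G d U E F → μH[(d:ℝ)] (E \ F) ≤ μH[(d:ℝ)] (F \ E)

/-- `C` is Almgren unique in `U`: it is the only reduced set of `F̄(C,U)` attaining the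
infimum of the `H^d` measure on `F̄(C,U)`. -/
def AlmgrenUniqueIn {n : ℕ} (d : ℕ) (U C : Set (Euc n)) : Prop :=
  ∀ E ∈ DeformClosure d C U, IsReducedSet d E →
    μH[(d:ℝ)] E = (⨅ F ∈ DeformClosure d C U, μH[(d:ℝ)] F) → E = C

/-- `C` is `G`-topologically unique in `U`: it is `G`-topologically minimal in `U`, and every
reduced `G`-topological competitor of `C` in `U` with the same measure in `U` equals `C`. -/
def TopUniqueIn (G : Type) [AddCommGroup G] {n : ℕ} (d : ℕ) (U C : Set (Euc n)) : Prop :=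
  TopMinimalIn G d U C ∧
  ∀ E : Set (Euc n), IsReducedSet d E → TopCompetitor G d U C E →
    μH[(d:ℝ)] (E ∩ U) = μH[(d:ℝ)] (C ∩ U) → E = C

/-- `C` is Almgren unique (in every bounded domain of `ℝⁿ`). -/
def AlmgrenUnique {n : ℕ} (d : ℕ) (C : Set (Euc n)) : Prop :=
  ∀ U : Set (Euc n), IsOpen U → Bornology.IsBounded U → U.Nonempty → AlmgrenUniqueIn d U C

/-- `C` is `G`-topologically unique (in every bounded domain of `ℝⁿ`). -/
def TopUnique (G : Type) [AddCommGroup G] {n : ℕ} (d : ℕ) (C : Set (Euc n)) : Prop :=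
  ∀ U : Set (Euc n), IsOpen U → Bornology.IsBounded U → U.Nonempty → TopUniqueIn G d U C

/-- `C` is a cone (centered at the origin). -/
def IsConeSet {n : ℕ} (C : Set (Euc n)) : Prop :=
  ∀ x ∈ C, ∀ t : ℝ, 0 ≤ t → t • x ∈ C


/-!
Outside `B` the limit is taken pointwise: `cl B' ⊆ B` keeps every point of `F \ B` at positive
distance from `B'`, and off `B'` all the `F_j` coincide with `E`.

For the sphere condition, singular homology has compact supports: a class of `H_k(S)` that dies
in `U \ F` already dies in `S ∪ K`, where `K ⊆ U \ F` is the compact union of the simplices of a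
bounding chain. By Hausdorff convergence some `F_j` misses `S ∪ K`, so the class dies in
`U \ F_j`, and it vanishes because `F_j` is a competitor in `B' ⊆ B`.
-/

namespace CategoryTheory.ShortComplex

variable {R : Type*} [Ring R] (S : ShortComplex (ModuleCat R))

lemma moduleCat_homologyπ_eq_zero_iff (y : S.cycles) :
    S.homologyπ y = 0 ↔ ∃ a, S.f a = S.iCycles y := by
  rw [← (ModuleCat.mono_iff_injective S.moduleCatHomologyIso.hom).1 inferInstance |>.eq_iff,
    map_zero, π_moduleCatCyclesIso_hom_apply]
  refine (Submodule.Quotient.mk_eq_zero _).trans ?_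
  rw [← moduleCatCyclesIso_hom_i_apply]
  exact exists_congr fun _ => Subtype.ext_iff

end CategoryTheory.ShortComplex

namespace HomologicalComplex
variable {R : Type*} [Ring R] {ι : Type*} {c : ComplexShape ι}
  {K L : HomologicalComplex (ModuleCat R) c}

lemma homologyMap_homologyπ_eq_zero_iff (φ : K ⟶ L) (i : ι) (z : K.cycles i) :
    homologyMap φ i (K.homologyπ i z) = 0 ↔
      ∃ w, L.d (c.prev i) i w = φ.f i (K.iCycles i z) := by
  rw [← ConcreteCategory.comp_apply, homologyπ_naturality, ConcreteCategory.comp_apply,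
    ← ConcreteCategory.comp_apply (K.iCycles i), ← cyclesMap_i, ConcreteCategory.comp_apply]
  exact (L.sc i).moduleCat_homologyπ_eq_zero_iff _

end HomologicalComplex

namespace SingularChains
variable (G : Type) [AddCommGroup G]

abbrev Simplex (X : TopCat.{0}) (m : ℕ) : Type :=
  (TopCat.toSSet.obj X).obj (Opposite.op (SimplexCategory.mk m))

abbrev simplexMap {A X : TopCat.{0}} (i : A ⟶ X) (m : ℕ) : Simplex A m → Simplex X m :=
  fun σ => (TopCat.toSSet.map i).app _ σ

lemma toSSetObjEquiv_simplexMap {A X : TopCat.{0}} (i : A ⟶ X) (m : ℕ) (σ : Simplex A m) :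
    X.toSSetObjEquiv _ (simplexMap i m σ) = i.hom.comp (A.toSSetObjEquiv _ σ) := rfl

def equivFinsupp (X : TopCat.{0}) (m : ℕ) :
    ((singularChainsFunctor G).obj X).X m ≃ₗ[ℤ] (Simplex X m →₀ G) :=
  letI := Classical.decEq (Simplex X m)
  TensorProduct.finsuppScalarLeft ℤ G (Simplex X m)

variable {G}

def support {X : TopCat.{0}} {m : ℕ} (w : ((singularChainsFunctor G).obj X).X m) : Set X :=
  ⋃ σ ∈ (equivFinsupp G X m w).support, Set.range (X.toSSetObjEquiv _ σ)

lemma isCompact_support {X : TopCat.{0}} {m : ℕ} (w : ((singularChainsFunctor G).obj X).X m) :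
    IsCompact (support w) :=
  (equivFinsupp G X m w).support.finite_toSet.isCompact_biUnion fun _ _ =>
    isCompact_range (map_continuous _)

lemma map_tmul {A X : TopCat.{0}} (i : A ⟶ X) (m : ℕ) (p : Simplex A m →₀ ℤ) (g : G) :
    ((singularChainsFunctor G).map i).f m
        (p ⊗ₜ[ℤ] g : ((singularChainsFunctor G).obj A).X m) =
      (p.mapDomain (simplexMap i m) ⊗ₜ[ℤ] g : ((singularChainsFunctor G).obj X).X m) := by
  change ((ModuleCat.free ℤ ⋙ tensorRight (ModuleCat.of ℤ G)).map
      ((TopCat.toSSet.map i).app (Opposite.op (SimplexCategory.mk m)))) (p ⊗ₜ[ℤ] g) = _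
  rw [Functor.comp_map]
  erw [ModuleCat.MonoidalCategory.whiskerRight_apply]
  rfl

lemma map_equivFinsupp_symm {A X : TopCat.{0}} (i : A ⟶ X) (m : ℕ) (p : Simplex A m →₀ G) :
    ((singularChainsFunctor G).map i).f m ((equivFinsupp G A m).symm p) =
      (equivFinsupp G X m).symm (p.mapDomain (simplexMap i m)) := by
  classical
  induction p using Finsupp.induction_linear with
  | zero => simp
  | add p q hp hq => simp [Finsupp.mapDomain_add, hp, hq]
  | single σ g =>
    simp only [Finsupp.mapDomain_single, equivFinsupp]
    erw [TensorProduct.finsuppScalarLeft_symm_apply_single,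
      TensorProduct.finsuppScalarLeft_symm_apply_single]
    exact (map_tmul i m _ g).trans (by rw [Finsupp.mapDomain_single]; rfl)

lemma map_injective {A X : TopCat.{0}} (i : A ⟶ X) (hi : Function.Injective i) (m : ℕ) :
    Function.Injective (((singularChainsFunctor G).map i).f m) := by
  have hs : Function.Injective (simplexMap i m) := fun σ τ h =>
    (A.toSSetObjEquiv _).injective <| ContinuousMap.ext fun y => hi <|
      DFunLike.congr_fun (congrArg (X.toSSetObjEquiv _) h) y
  intro a b hab
  rw [← (equivFinsupp G A m).symm_apply_apply a, ← (equivFinsupp G A m).symm_apply_apply b,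
    map_equivFinsupp_symm, map_equivFinsupp_symm] at hab
  exact (equivFinsupp G A m).injective (Finsupp.mapDomain_injective hs
    ((equivFinsupp G X m).symm.injective hab))

lemma exists_map_eq {A X : TopCat.{0}} (i : A ⟶ X) {m : ℕ}
    (w : ((singularChainsFunctor G).obj X).X m)
    (hw : ∀ σ ∈ (equivFinsupp G X m w).support, σ ∈ Set.range (simplexMap i m)) :
    ∃ w', ((singularChainsFunctor G).map i).f m w' = w := by
  have hmem : equivFinsupp G X m w ∈ Finsupp.supported G ℤ (Set.range (simplexMap i m)) := hw
  rw [← Set.image_univ, ← Finsupp.lmapDomain_supported, Finsupp.supported_univ] at hmem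
  obtain ⟨p, -, hp⟩ := hmem
  exact ⟨(equivFinsupp G A m).symm p, by
    rw [map_equivFinsupp_symm, ← Finsupp.lmapDomain_apply G ℤ, hp,
      LinearEquiv.symm_apply_apply]⟩

lemma exists_map_inclusion_eq_of_support_subset {Y : Type} [TopologicalSpace Y] {L V : Set Y}
    (h : L ⊆ V) {m : ℕ} (w : ((singularChainsFunctor G).obj (TopCat.of V)).X m)
    (hw : support w ⊆ Subtype.val ⁻¹' L) :
    ∃ w', ((singularChainsFunctor G).map (TopCat.ofHom (ContinuousMap.inclusion h))).f m w' =
      w := by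
  refine exists_map_eq _ w fun σ hσ => ?_
  let f := (TopCat.of V).toSSetObjEquiv _ σ
  have hf : ∀ y, (f y : Y) ∈ L := fun y => hw (Set.mem_biUnion hσ ⟨y, rfl⟩)
  refine ⟨(TopCat.of L).toSSetObjEquiv _ |>.symm
    ⟨fun y => ⟨f y, hf y⟩, by fun_prop⟩, (TopCat.of V).toSSetObjEquiv _ |>.injective ?_⟩
  rw [toSSetObjEquiv_simplexMap, Equiv.apply_symm_apply]
  rfl

end SingularChains

section SingularHomology
variable (G : Type) [AddCommGroup G] (k : ℕ) {X : Type} [TopologicalSpace X]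

abbrev homologyInclusion {A B : Set X} (h : A ⊆ B) :
    (singularHomologyFunctor G k).obj (TopCat.of A) ⟶
      (singularHomologyFunctor G k).obj (TopCat.of B) :=
  (singularHomologyFunctor G k).map (TopCat.ofHom (ContinuousMap.inclusion h))

lemma homologyInclusion_trans {A B C : Set X} (hAB : A ⊆ B) (hBC : B ⊆ C) :
    homologyInclusion G k (hAB.trans hBC) =
      homologyInclusion G k hAB ≫ homologyInclusion G k hBC := by
  rw [← Functor.map_comp]; rfl

variable {G k}

theorem exists_isCompact_homologyInclusion_eq_zero {S V : Set X} (hSV : S ⊆ V)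
    {c : (singularHomologyFunctor G k).obj (TopCat.of S)} (hc : homologyInclusion G k hSV c = 0) :
    ∃ K ⊆ V, IsCompact K ∧
      homologyInclusion G k (subset_union_left : S ⊆ S ∪ K) c = 0 := by
  obtain ⟨z, rfl⟩ := (ModuleCat.epi_iff_surjective (HomologicalComplex.homologyπ _ k)).1
    inferInstance c
  obtain ⟨w, hw⟩ := (HomologicalComplex.homologyMap_homologyπ_eq_zero_iff _ k z).1 hc
  have hKV : Subtype.val '' SingularChains.support w ⊆ V := by
    rintro _ ⟨x, -, rfl⟩
    exact x.2
  have hSKV : S ∪ Subtype.val '' SingularChains.support w ⊆ V := union_subset hSV hKV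
  refine ⟨_, hKV, (SingularChains.isCompact_support w).image continuous_subtype_val, ?_⟩
  obtain ⟨w', hw'⟩ := SingularChains.exists_map_inclusion_eq_of_support_subset hSKV w
    fun x hx => Or.inr ⟨x, hx, rfl⟩
  refine (HomologicalComplex.homologyMap_homologyπ_eq_zero_iff _ k z).2
    ⟨w', SingularChains.map_injective (TopCat.ofHom (ContinuousMap.inclusion hSKV))
      (Set.inclusion_injective hSKV) k ?_⟩
  have hfactor : (singularChainsFunctor G).map (TopCat.ofHom (ContinuousMap.inclusion hSV)) =
      (singularChainsFunctor G).map (TopCat.ofHom (ContinuousMap.inclusion subset_union_left)) ≫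
        (singularChainsFunctor G).map (TopCat.ofHom (ContinuousMap.inclusion hSKV)) := by
    rw [← Functor.map_comp]; rfl
  rw [← ConcreteCategory.comp_apply, ← HomologicalComplex.Hom.comm, ConcreteCategory.comp_apply,
    hw', hw, hfactor]
  rfl

end SingularHomology

lemma IsEuclideanSphere.isCompact {n k : ℕ} {S : Set (Euc n)} (hS : IsEuclideanSphere k S) :
    IsCompact S := by
  obtain ⟨W, x, r, -, -, -, rfl⟩ := hS
  exact (isCompact_sphere x r).inter_left W.closed_of_finiteDimensional

namespace LocHausdorffTendsto

variable {n : ℕ} {Fj : ℕ → Set (Euc n)} {F : Set (Euc n)}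

lemma eventually_infEDist_lt (hlim : LocHausdorffTendsto Fj F) {K : Set (Euc n)}
    (hK : IsCompact K) {ε : ℝ≥0∞} (hε : 0 < ε) :
    ∀ᶠ j in atTop,
      (∀ x ∈ Fj j ∩ K, infEDist x F < ε) ∧ ∀ x ∈ F ∩ K, infEDist x (Fj j) < ε :=
  ((hlim K hK).eventually_lt_const hε).mono fun _ hj =>
    ⟨fun x hx => ((le_iSup₂ (f := fun y (_ : y ∈ _ ∩ K) => infEDist y F) x hx).trans
        le_sup_left).trans_lt hj,
      fun x hx => ((le_iSup₂ (f := fun y (_ : y ∈ F ∩ K) => infEDist y _) x hx).trans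
        le_sup_right).trans_lt hj⟩

lemma mem_closure_of_forall_mem (hlim : LocHausdorffTendsto Fj F) {x : Euc n}
    (hx : ∀ j, x ∈ Fj j) : x ∈ closure F := by
  rw [mem_closure_iff_infEDist_zero]
  by_contra hne
  obtain ⟨j, hj, -⟩ :=
    (hlim.eventually_infEDist_lt isCompact_singleton (pos_iff_ne_zero.2 hne)).exists
  exact (hj x ⟨hx j, rfl⟩).false

lemma inter_subset_closure (hlim : LocHausdorffTendsto Fj F) {W T : Set (Euc n)}
    (hW : IsOpen W) (hT : ∀ j, Fj j ∩ W ⊆ T) : F ∩ W ⊆ closure T := by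
  rintro x ⟨hxF, hxW⟩
  obtain ⟨r, hr, hrW⟩ := EMetric.isOpen_iff.1 hW x hxW
  refine EMetric.mem_closure_iff.2 fun ε hε => ?_
  obtain ⟨j, -, hj⟩ :=
    (hlim.eventually_infEDist_lt isCompact_singleton (lt_min hε hr)).exists
  obtain ⟨y, hyFj, hxy⟩ := infEDist_lt_iff.1 (hj x ⟨hxF, rfl⟩)
  have hyW : y ∈ W := hrW (Metric.mem_eball'.2 (hxy.trans_le (min_le_right _ _)))
  exact ⟨y, hT j ⟨hyFj, hyW⟩, hxy.trans_le (min_le_left _ _)⟩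

lemma eventually_disjoint (hlim : LocHausdorffTendsto Fj F) (hF : IsClosed F) {L : Set (Euc n)}
    (hL : IsCompact L) (hLF : Disjoint L F) : ∀ᶠ j in atTop, Disjoint L (Fj j) := by
  rcases L.eq_empty_or_nonempty with rfl | hne
  · exact Eventually.of_forall fun _ => empty_disjoint _
  obtain ⟨x₀, hx₀, hmin⟩ := hL.exists_isMinOn hne continuous_infEDist.continuousOn
  have hpos : 0 < infEDist x₀ F := by
    rw [infEDist_pos_iff_notMem_closure, hF.closure_eq]
    exact disjoint_left.1 hLF hx₀
  refine (hlim.eventually_infEDist_lt hL hpos).mono fun j hj => disjoint_left.2 fun x hxL hxFj => ?_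
  exact (hj.1 x ⟨hxFj, hxL⟩).not_ge (hmin hxL)

lemma sdiff_eq (hlim : LocHausdorffTendsto Fj F) (hF : IsClosed F) {E B' B : Set (Euc n)}
    (hE : IsClosed E) (hFj : ∀ j, Fj j \ B' = E \ B') (hB'B : closure B' ⊆ B) :
    F \ B = E \ B := by
  have hB' : B' ⊆ B := subset_closure.trans hB'B
  refine Subset.antisymm (fun x hx => ⟨?_, hx.2⟩) (fun x hx => ⟨?_, hx.2⟩)
  · have hT : ∀ j, Fj j ∩ (closure B')ᶜ ⊆ E := fun j y hy =>
      ((hFj j).subset ⟨hy.1, fun h => hy.2 (subset_closure h)⟩).1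
    exact hE.closure_subset (hlim.inter_subset_closure isClosed_closure.isOpen_compl hT
      ⟨hx.1, fun h => hx.2 (hB'B h)⟩)
  · exact hF.closure_subset (hlim.mem_closure_of_forall_mem fun j =>
      ((hFj j).symm.subset ⟨hx.1, fun h => hx.2 (hB' h)⟩).1)

end LocHausdorffTendsto

theorem statement2_general {n d : ℕ} (G : Type) [AddCommGroup G]
    (U E B' : Set (Euc n)) (hE : IsClosed E)
    (Fj : ℕ → Set (Euc n)) (hFj : ∀ j, TopCompetitorIn G d U B' E (Fj j))
    (F : Set (Euc n)) (hF : IsClosed F) (hlim : LocHausdorffTendsto Fj F)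
    (B : Set (Euc n)) (hBconv : Convex ℝ B) (hB'B : closure B' ⊆ B) (hBU : closure B ⊆ U) :
    TopCompetitorIn G d U B E F := by
  refine ⟨hF, hBconv, hBU, hlim.sdiff_eq hF hE (fun j => (hFj j).2.2.2.1) hB'B, ?_⟩
  intro S hS hSB hSE hSF hnon
  change Function.Injective (homologyInclusion G _ hSF)
  rw [injective_iff_map_eq_zero]
  intro c hc
  obtain ⟨K, hKV, hK, hcK⟩ := exists_isCompact_homologyInclusion_eq_zero hSF hc
  have hSKF : S ∪ K ⊆ U \ F := union_subset hSF hKV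
  obtain ⟨j, hj⟩ := (hlim.eventually_disjoint hF (hS.isCompact.union hK)
    (disjoint_left.2 fun x hx => (hSKF hx).2)).exists
  have hSKj : S ∪ K ⊆ U \ Fj j := fun x hx => ⟨(hSKF hx).1, disjoint_left.1 hj hx⟩
  have hSB' : S ⊆ U \ (B' ∪ E) :=
    hSB.trans (sdiff_subset_sdiff_right (union_subset_union_left _ (subset_closure.trans hB'B)))
  refine (hFj j).2.2.2.2 S hS hSB' hSE (subset_union_left.trans hSKj) hnon ?_
  change homologyInclusion G _ (subset_union_left.trans hSKj) c = homologyInclusion G _ _ 0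
  rw [map_zero, homologyInclusion_trans G _ subset_union_left hSKj, ConcreteCategory.comp_apply,
    hcK, map_zero]

/-- Proposition 2.8: topological competitors pass to the limit. Let `G` be an
abelian group, `E` a closed set in an open domain `U ⊆ ℝⁿ`, and `B'` a convex set with
`cl B' ⊆ U`. If `F_j` are `d`-dimensional `G`-topological competitors of `E` in `B'` converging
to a closed set `F` in (local) Hausdorff distance, then for every convex set `B` with
`cl B' ⊆ B ⊆ cl B ⊆ U`, the set `F` is a `G`-topological competitor of dimension `d` of `E`
in `B`. -/
theorem statement2 {n d : ℕ} (G : Type) [AddCommGroup G]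
    (U E B' : Set (Euc n)) (hU : IsOpen U) (hE : IsClosed E)
    (hB'conv : Convex ℝ B') (hB'U : closure B' ⊆ U)
    (Fj : ℕ → Set (Euc n)) (hFj : ∀ j, TopCompetitorIn G d U B' E (Fj j))
    (F : Set (Euc n)) (hF : IsClosed F) (hlim : LocHausdorffTendsto Fj F)
    (B : Set (Euc n)) (hBconv : Convex ℝ B) (hB'B : closure B' ⊆ B) (hBU : closure B ⊆ U) :
    TopCompetitorIn G d U B E F :=
  statement2_general G U E B' hE Fj hFj F hF hlim B hBconv hB'B hBU
end
end

section
/- Let ∂E₀ ⊂ ℝⁿ be a compact (d−1)-rectifiable set with finite H^{d−1} measure which is contained in the dyadic (d−1)-skeleton |Δ_{k₀,d−1}| for some k₀ ∈ ℕ. For each k ∈ ℕ let R_k = {Q ∈ Δ_k : there exists Q' ∈ Δ_k with Q' ∩ ∂E₀ ≠ ∅ and Q ∩ Q' ≠ ∅}, and let T_{k,d} be the union of all d-dimensional faces of cubes in R_k. Then lim_{k→∞} H^d(T_{k,d}) = 0. -/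
open Set MeasureTheory Metric Filter CategoryTheory MonoidalCategory
open scoped NNReal ENNReal

noncomputable section

/-- The closed dyadic cube of `Δ_k` (side `2^{-k}`) with lower corner `2^{-k} • c`. -/
def dyadicCube (n k : ℕ) (c : Fin n → ℤ) : Set (Euc n) :=
  {x | ∀ i, x i ∈ Icc ((c i : ℝ) * (2:ℝ)^(-(k:ℤ))) (((c i : ℝ) + 1) * (2:ℝ)^(-(k:ℤ)))}

/-- A face of the dyadic cube `dyadicCube n k c`: the coordinates in `A` run through the
cube's range, the others are frozen at one of the two endpoints (chosen by `ε`). -/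
def cubeFace (n k : ℕ) (c : Fin n → ℤ) (A : Finset (Fin n)) (ε : Fin n → Bool) : Set (Euc n) :=
  {x | ∀ i, (i ∈ A → x i ∈ Icc ((c i : ℝ) * (2:ℝ)^(-(k:ℤ))) (((c i : ℝ) + 1) * (2:ℝ)^(-(k:ℤ)))) ∧
      (i ∉ A → x i = ((c i : ℝ) + if ε i then 1 else 0) * (2:ℝ)^(-(k:ℤ)))}

/-- The `j`-skeleton `|Δ_{k,j}|` of the dyadic grid of side `2^{-k}` in `ℝⁿ`. -/
def dyadicSkeleton (n k j : ℕ) : Set (Euc n) :=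
  ⋃ (c : Fin n → ℤ) (A : Finset (Fin n)) (_ : A.card = j) (ε : Fin n → Bool), cubeFace n k c A ε

/-- The family (of lower corners) of cubes of `Δ_k` touching some cube of `Δ_k` that meets `S`;
this is `Q_k` for `S = E₀` and `R_k` for `S = ∂E₀`. -/
def nbrCubes (n k : ℕ) (S : Set (Euc n)) : Set (Fin n → ℤ) :=
  {c | ∃ c', (dyadicCube n k c' ∩ S).Nonempty ∧ (dyadicCube n k c ∩ dyadicCube n k c').Nonempty}

/-- The union of the `j`-dimensional faces of the cubes of the family `𝒞` (e.g. `S_{k,j}`,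
`T_{k,j}`). -/
def facesUnion (n k j : ℕ) (𝒞 : Set (Fin n → ℤ)) : Set (Euc n) :=
  ⋃ (c ∈ 𝒞) (A : Finset (Fin n)) (_ : A.card = j) (ε : Fin n → Bool), cubeFace n k c A ε

/-- The union of the cubes of the family `𝒞` (e.g. `|Q_k|`, `|R_k|`). -/
def cubesUnion (n k : ℕ) (𝒞 : Set (Fin n → ℤ)) : Set (Euc n) :=
  ⋃ c ∈ 𝒞, dyadicCube n k c

/-- `V(Q)`: the union of the cubes of `Δ_k` that touch some cube of `Δ_k` touching
`Q = dyadicCube n k c`. -/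
def VQ (n k : ℕ) (c : Fin n → ℤ) : Set (Euc n) :=
  ⋃ c' ∈ {c' | ∃ c'', (dyadicCube n k c'' ∩ dyadicCube n k c).Nonempty ∧
      (dyadicCube n k c'' ∩ dyadicCube n k c').Nonempty}, dyadicCube n k c'

/-- The unit cube `[0,1]ⁿ`. -/
def unitCube (n : ℕ) : Set (Euc n) := {x | ∀ i, x i ∈ Icc (0:ℝ) 1}

/-- Hypothesis (4.2): there is a bi-Lipschitz homeomorphism between the convex hull of `E`
and a unit cube `Q₀`, under which `E ∩ ∂U` corresponds to a subset of the dyadic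
`(d-1)`-skeleton `|Δ_{k,d-1}|`, for some `k ∈ ℕ`. -/
def BiLipCubeStructure {n : ℕ} (d : ℕ) (U E : Set (Euc n)) : Prop :=
  ∃ (k : ℕ) (ψ : Euc n → Euc n) (L : ℝ≥0), 0 < L ∧
    LipschitzOnWith L ψ (convexHull ℝ E) ∧
    (∀ x ∈ convexHull ℝ E, ∀ y ∈ convexHull ℝ E, dist x y ≤ L * dist (ψ x) (ψ y)) ∧
    ψ '' convexHull ℝ E = unitCube n ∧
    ψ '' (E ∩ frontier U) ⊆ dyadicSkeleton n k (d - 1)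

/-- `U` is a uniformly convex set. -/
def UniformlyConvexSet {n : ℕ} (U : Set (Euc n)) : Prop :=
  ∀ ε > 0, ∃ δ > 0, ∀ x ∈ closure U, ∀ y ∈ closure U, ε ≤ dist x y →
    ball (midpoint ℝ x y) δ ⊆ U

/-- `S` is `d`-rectifiable: up to an `H^d`-null set, `S` is covered by countably many
Lipschitz images of `ℝ^d`. -/
def IsHRectifiable {n : ℕ} (d : ℕ) (S : Set (Euc n)) : Prop :=
  ∃ f : ℕ → (EuclideanSpace ℝ (Fin d) → Euc n),
    (∀ m, ∃ L : ℝ≥0, LipschitzWith L (f m)) ∧ μH[(d:ℝ)] (S \ ⋃ m, range (f m)) = 0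


/-!
A compact subset of the skeleton `|Δ_{k₀,d-1}|` meets only finitely many `(d-1)`-faces of
`Δ_{k₀}`, so it suffices to treat one such face `F`. At scale `2^{-k}` the cubes of `Δ_k`
touching a cube that meets `F` number `O(2^{k(d-1)})`, and each of their `d`-faces has
`H^d` measure `O(2^{-kd})`; hence `H^d(T_{k,d}) = O(2^{-k})`.
-/

theorem mem_Icc_mul_two_zpow_neg_iff {a b y : ℝ} (k : ℕ) :
    y ∈ Icc (a * 2 ^ (-(k : ℤ))) (b * 2 ^ (-(k : ℤ))) ↔ 2 ^ k * y ∈ Icc a b := by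
  have h : (0 : ℝ) < 2 ^ k := by positivity
  simp only [mem_Icc, zpow_neg, zpow_natCast, mul_inv_le_iff₀ h, le_mul_inv_iff₀ h, mul_comm y]

theorem eq_mul_two_zpow_neg_iff {a y : ℝ} (k : ℕ) : y = a * 2 ^ (-(k : ℤ)) ↔ 2 ^ k * y = a := by
  rw [zpow_neg, zpow_natCast, eq_mul_inv_iff_mul_eq₀ (by positivity), mul_comm]

section DyadicGrid

variable {n k : ℕ}

theorem mem_dyadicCube_iff {c : Fin n → ℤ} {x : Euc n} :
    x ∈ dyadicCube n k c ↔ ∀ i, 2 ^ k * x i ∈ Icc (c i : ℝ) (c i + 1) := by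
  simp only [dyadicCube, mem_ofPred_eq, mem_Icc_mul_two_zpow_neg_iff]

theorem mem_cubeFace_iff {c : Fin n → ℤ} {A : Finset (Fin n)} {ε : Fin n → Bool} {x : Euc n} :
    x ∈ cubeFace n k c A ε ↔ ∀ i, (i ∈ A → 2 ^ k * x i ∈ Icc (c i : ℝ) (c i + 1)) ∧
      (i ∉ A → 2 ^ k * x i = c i + if ε i then 1 else 0) := by
  simp only [cubeFace, mem_ofPred_eq, mem_Icc_mul_two_zpow_neg_iff, eq_mul_two_zpow_neg_iff]

theorem cubeFace_subset_dyadicCube (c : Fin n → ℤ) (A : Finset (Fin n)) (ε : Fin n → Bool) :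
    cubeFace n k c A ε ⊆ dyadicCube n k c := by
  intro x hx
  rw [mem_cubeFace_iff] at hx
  rw [mem_dyadicCube_iff]
  intro i
  by_cases hi : i ∈ A
  · exact (hx i).1 hi
  · rw [(hx i).2 hi]
    split_ifs <;> constructor <;> linarith

theorem mem_nbrCubes_of_mem {S : Set (Euc n)} {c : Fin n → ℤ} {x : Euc n}
    (hxc : x ∈ dyadicCube n k c) (hxS : x ∈ S) : c ∈ nbrCubes n k S :=
  ⟨c, ⟨x, hxc, hxS⟩, x, hxc, hxc⟩

/-- Touching cubes have corners at distance at most `1` in each coordinate, so a cube touching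
a cube containing a point with scaled coordinate `t` has corner coordinate in `[t - 2, t + 1]`. -/
theorem nbrCubes_subset_piFinset {S : Set (Euc n)} (a : Fin n → ℤ) (w : Fin n → ℕ)
    (hS : ∀ x ∈ S, ∀ i, 2 ^ k * x i ∈ Icc (a i : ℝ) (a i + w i)) :
    nbrCubes n k S ⊆ Fintype.piFinset fun i => Finset.Icc (a i - 2) (a i + w i + 1) := by
  rintro c ⟨c', ⟨x, hxc', hxS⟩, y, hyc, hyc'⟩
  rw [mem_dyadicCube_iff] at hxc' hyc hyc'
  simp only [Finset.mem_coe, Fintype.mem_piFinset, Finset.mem_Icc]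
  intro i
  obtain ⟨hx₁, hx₂⟩ := hS x hxS i
  obtain ⟨hxc₁, hxc₂⟩ := hxc' i
  obtain ⟨hyc₁, hyc₂⟩ := hyc i
  obtain ⟨hyc'₁, hyc'₂⟩ := hyc' i
  constructor
  · have : (a i : ℝ) - 2 ≤ c i := by linarith
    exact_mod_cast this
  · have : (c i : ℝ) ≤ a i + w i + 1 := by linarith
    exact_mod_cast this

theorem card_piFinset_Icc (a : Fin n → ℤ) (w : Fin n → ℕ) :
    (Fintype.piFinset fun i => Finset.Icc (a i - 2) (a i + w i + 1)).card = ∏ i, (w i + 4) := by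
  rw [Fintype.card_piFinset]
  refine Finset.prod_congr rfl fun i _ => ?_
  rw [Int.card_Icc]
  omega

theorem nbrCubes_finite {S : Set (Euc n)} (hS : Bornology.IsBounded S) :
    (nbrCubes n k S).Finite := by
  obtain ⟨R, hR⟩ := hS.exists_norm_le
  set N : ℕ := ⌈2 ^ k * R⌉₊
  refine (Finset.finite_toSet _).subset (nbrCubes_subset_piFinset (fun _ => -N) (fun _ => 2 * N) ?_)
  intro x hx i
  have hxi : |x i| ≤ R := (PiLp.norm_apply_le x i).trans (hR x hx)
  have hN : 2 ^ k * R ≤ N := Nat.le_ceil _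
  have hk : (0 : ℝ) < 2 ^ k := by positivity
  rw [abs_le] at hxi
  push_cast
  constructor <;> nlinarith

end DyadicGrid

theorem lipschitzWith_toLp_two (ι : Type*) [Fintype ι] :
    LipschitzWith (NNReal.sqrt (Fintype.card ι))
      (WithLp.toLp 2 : (ι → ℝ) → EuclideanSpace ℝ ι) := by
  simpa [NNReal.sqrt_eq_rpow] using PiLp.lipschitzWith_toLp 2 (fun _ : ι => ℝ)

theorem ENNReal.ofReal_two_zpow_neg (k : ℕ) : ENNReal.ofReal (2 ^ (-(k : ℤ))) = 2⁻¹ ^ k := by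
  rw [zpow_neg, zpow_natCast, ← inv_pow, ENNReal.ofReal_pow (by norm_num),
    ENNReal.ofReal_inv_of_pos two_pos, ENNReal.ofReal_ofNat]

/-- A `j`-face is the image of a `j`-dimensional box of side `2^{-k}` under a map that is
`1`-Lipschitz into the sup norm, hence `√n`-Lipschitz into `ℝⁿ`. -/
theorem hausdorffMeasure_cubeFace_le {n k : ℕ} (c : Fin n → ℤ) (A : Finset (Fin n))
    (ε : Fin n → Bool) :
    μH[(A.card : ℝ)] (cubeFace n k c A ε) ≤ ((NNReal.sqrt n : ℝ≥0∞) * 2⁻¹ ^ k) ^ A.card := by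
  set ℓ : ℝ := 2 ^ (-(k : ℤ))
  let ψ : (A → ℝ) → Fin n → ℝ := fun y i =>
    if h : i ∈ A then y ⟨i, h⟩ else (c i + if ε i then 1 else 0) * ℓ
  let box : Set (A → ℝ) := univ.pi fun i => Icc (c i * ℓ) ((c i + 1) * ℓ)
  have hsub : cubeFace n k c A ε ⊆ (WithLp.toLp 2 ∘ ψ) '' box := by
    intro x hx
    refine ⟨fun i => x i, fun i _ => (hx i).1 i.2, ?_⟩
    ext i
    by_cases hi : i ∈ A
    · simp [ψ, hi]
    · simp only [Function.comp_apply, PiLp.toLp_apply, ψ, dif_neg hi]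
      exact ((hx i).2 hi).symm
  have hψ : LipschitzWith 1 ψ := by
    refine LipschitzWith.of_dist_le_mul fun y y' => ?_
    rw [NNReal.coe_one, one_mul, dist_pi_le_iff dist_nonneg]
    intro i
    by_cases hi : i ∈ A
    · simpa [ψ, hi] using dist_le_pi_dist y y' ⟨i, hi⟩
    · simp [ψ, hi]
  have hbox : μH[(A.card : ℝ)] box = (2⁻¹ ^ k) ^ A.card := by
    have hside : ∀ i : A, volume (Icc (c i * ℓ) ((c i + 1) * ℓ)) = 2⁻¹ ^ k := fun i => by
      rw [Real.volume_Icc, add_one_mul, add_sub_cancel_left, ENNReal.ofReal_two_zpow_neg]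
    rw [← Fintype.card_coe A, hausdorffMeasure_pi_real, volume_pi_pi]
    simp [hside]
  calc μH[(A.card : ℝ)] (cubeFace n k c A ε)
      ≤ μH[(A.card : ℝ)] ((WithLp.toLp 2 ∘ ψ) '' box) := measure_mono hsub
    _ ≤ (NNReal.sqrt n * 1 : ℝ≥0) ^ (A.card : ℝ) * μH[(A.card : ℝ)] box := by
        simpa using ((lipschitzWith_toLp_two (Fin n)).comp hψ).hausdorffMeasure_image_le
          (Nat.cast_nonneg _) box
    _ = ((NNReal.sqrt n : ℝ≥0∞) * 2⁻¹ ^ k) ^ A.card := by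
        rw [hbox, mul_one, ENNReal.rpow_natCast, mul_pow]

section FaceCounting

variable {n k j : ℕ}

theorem measure_facesUnion_le (μ : Measure (Euc n)) (𝒞 : Finset (Fin n → ℤ)) {B : ℝ≥0∞}
    (hB : ∀ c A ε, A.card = j → μ (cubeFace n k c A ε) ≤ B) :
    μ (facesUnion n k j 𝒞) ≤ 𝒞.card * 4 ^ n * B := by
  set P := (Finset.univ : Finset (Finset (Fin n) × (Fin n → Bool))).filter fun p => p.1.card = j
  have hcover : facesUnion n k j 𝒞 ⊆ ⋃ c ∈ 𝒞, ⋃ p ∈ P, cubeFace n k c p.1 p.2 := by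
    simp only [facesUnion, Finset.mem_coe, iUnion_subset_iff]
    intro c hc A hA ε
    exact subset_biUnion_of_mem (u := fun c => ⋃ p ∈ P, cubeFace n k c p.1 p.2) hc
      |>.trans' (subset_biUnion_of_mem (u := fun p => cubeFace n k c p.1 p.2)
        (Finset.mem_filter.2 ⟨Finset.mem_univ (A, ε), hA⟩))
  have hP : (P.card : ℝ≥0∞) ≤ 4 ^ n := by
    have : P.card ≤ 4 ^ n := (Finset.card_filter_le _ _).trans_eq <| by
      simp [Fintype.card_finset, ← mul_pow]
    exact_mod_cast this
  calc μ (facesUnion n k j 𝒞)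
      ≤ ∑ c ∈ 𝒞, ∑ p ∈ P, μ (cubeFace n k c p.1 p.2) :=
        (measure_mono hcover).trans <| (measure_biUnion_finset_le _ _).trans <|
          Finset.sum_le_sum fun c _ => measure_biUnion_finset_le _ _
    _ ≤ ∑ _c ∈ 𝒞, ∑ _p ∈ P, B := by
        gcongr with c _ p hp
        exact hB _ _ _ (Finset.mem_filter.1 hp).2
    _ ≤ 𝒞.card * 4 ^ n * B := by
        simp only [Finset.sum_const, nsmul_eq_mul, ← mul_assoc]
        gcongr

theorem facesUnion_mono {𝒞 𝒞' : Set (Fin n → ℤ)} (h : 𝒞 ⊆ 𝒞') :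
    facesUnion n k j 𝒞 ⊆ facesUnion n k j 𝒞' :=
  biUnion_subset_biUnion_left h

theorem facesUnion_nbrCubes_subset_biUnion {ι : Type*} {S : Set (Euc n)} {T : Finset ι}
    {F : ι → Set (Euc n)} (hS : S ⊆ ⋃ t ∈ T, F t) :
    facesUnion n k j (nbrCubes n k S) ⊆ ⋃ t ∈ T, facesUnion n k j (nbrCubes n k (F t)) := by
  intro y hy
  simp only [facesUnion, mem_iUnion] at hy ⊢
  obtain ⟨c, ⟨c', ⟨x, hxc', hxS⟩, htouch⟩, A, hA, ε, hyF⟩ := hy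
  obtain ⟨t, ht, hxt⟩ := mem_iUnion₂.1 (hS hxS)
  exact ⟨t, ht, c, ⟨c', ⟨x, hxc', hxt⟩, htouch⟩, A, hA, ε, hyF⟩

theorem exists_finset_cubeFace_cover {S : Set (Euc n)} (hS : Bornology.IsBounded S)
    (hskel : S ⊆ dyadicSkeleton n k j) :
    ∃ T : Finset ((Fin n → ℤ) × Finset (Fin n) × (Fin n → Bool)),
      (∀ t ∈ T, t.2.1.card = j) ∧ S ⊆ ⋃ t ∈ T, cubeFace n k t.1 t.2.1 t.2.2 := by
  refine ⟨((nbrCubes_finite (k := k) hS).toFinset ×ˢ Finset.univ).filter fun t => t.2.1.card = j,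
    fun t ht => (Finset.mem_filter.1 ht).2, fun x hx => ?_⟩
  obtain ⟨c, A, hA, ε, hxF⟩ : ∃ c A, A.card = j ∧ ∃ ε, x ∈ cubeFace n k c A ε := by
    simpa [dyadicSkeleton] using hskel hx
  refine mem_iUnion₂.2 ⟨(c, A, ε), ?_, hxF⟩
  simp only [Finset.mem_filter, Finset.mem_product, Set.Finite.mem_toFinset, Finset.mem_univ,
    and_true]
  exact ⟨mem_nbrCubes_of_mem (cubeFace_subset_dyadicCube c A ε hxF) hx, hA⟩

end FaceCounting

section CoarseFace

variable {n k₀ k : ℕ}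

/-- At scale `2^{-k}` the face spans an interval of length `2^{k-k₀}` in each direction of `A₀`
and a single point in the others. -/
theorem exists_finset_nbrCubes_cubeFace (hk : k₀ ≤ k) (c₀ : Fin n → ℤ) (A₀ : Finset (Fin n))
    (ε₀ : Fin n → Bool) :
    ∃ 𝒞 : Finset (Fin n → ℤ), nbrCubes n k (cubeFace n k₀ c₀ A₀ ε₀) ⊆ 𝒞 ∧
      𝒞.card ≤ (2 ^ (k - k₀) + 4) ^ A₀.card * 4 ^ n := by
  set m : ℕ := 2 ^ (k - k₀)
  refine ⟨_, nbrCubes_subset_piFinset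
    (fun i => (c₀ i + if i ∈ A₀ then 0 else if ε₀ i then 1 else 0) * m)
    (fun i => if i ∈ A₀ then m else 0) fun x hx i => ?_, ?_⟩
  · have hscale : (2 : ℝ) ^ k * x i = m * (2 ^ k₀ * x i) := by
      rw [← mul_assoc, Nat.cast_pow, Nat.cast_ofNat, ← pow_add, Nat.sub_add_cancel hk]
    have hm : (0 : ℝ) ≤ m := Nat.cast_nonneg _
    rw [mem_cubeFace_iff] at hx
    rw [hscale]
    by_cases hi : i ∈ A₀
    · obtain ⟨h₁, h₂⟩ := (hx i).1 hi
      simp only [hi, if_true]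
      push_cast
      constructor <;> nlinarith
    · rw [(hx i).2 hi]
      simp only [hi, if_false]
      push_cast
      constructor <;> linarith
  · rw [card_piFinset_Icc]
    calc ∏ i, ((if i ∈ A₀ then m else 0) + 4)
        ≤ ∏ i, ((if i ∈ A₀ then m + 4 else 1) * 4) :=
          Finset.prod_le_prod' fun i _ => by split_ifs <;> omega
      _ = (m + 4) ^ A₀.card * 4 ^ n := by
          rw [Finset.prod_mul_distrib, Finset.prod_ite_mem, Finset.univ_inter, Finset.prod_const,
            Finset.prod_const, Finset.card_univ, Fintype.card_fin]

theorem hausdorffMeasure_facesUnion_nbrCubes_cubeFace_le (hk : k₀ ≤ k) (c₀ : Fin n → ℤ)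
    (A₀ : Finset (Fin n)) (ε₀ : Fin n → Bool) :
    μH[((A₀.card + 1 : ℕ) : ℝ)]
        (facesUnion n k (A₀.card + 1) (nbrCubes n k (cubeFace n k₀ c₀ A₀ ε₀))) ≤
      5 ^ A₀.card * 16 ^ n * (NNReal.sqrt n : ℝ≥0∞) ^ (A₀.card + 1) * 2⁻¹ ^ k := by
  obtain ⟨𝒞, hsub, hcard⟩ := exists_finset_nbrCubes_cubeFace hk c₀ A₀ ε₀
  set j := A₀.card
  have hside : ((2 ^ (k - k₀) + 4 : ℕ) : ℝ≥0∞) ≤ 5 * 2 ^ k := by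
    have h₁ : 2 ^ (k - k₀) ≤ 2 ^ k := Nat.pow_le_pow_right two_pos (Nat.sub_le k k₀)
    have h₂ : 1 ≤ 2 ^ k := Nat.one_le_two_pow
    exact_mod_cast (by omega : 2 ^ (k - k₀) + 4 ≤ 5 * 2 ^ k)
  have hcard' : (𝒞.card : ℝ≥0∞) ≤ (5 * 2 ^ k) ^ j * 4 ^ n :=
    calc (𝒞.card : ℝ≥0∞) ≤ (((2 ^ (k - k₀) + 4 : ℕ) ^ j * 4 ^ n : ℕ) : ℝ≥0∞) := by
          exact_mod_cast hcard
      _ ≤ (5 * 2 ^ k) ^ j * 4 ^ n := by push_cast at hside ⊢; gcongr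
  have hcancel : (2 : ℝ≥0∞) ^ k * 2⁻¹ ^ k = 1 := by
    rw [← mul_pow, ENNReal.mul_inv_cancel two_ne_zero ENNReal.ofNat_ne_top, one_pow]
  calc μH[((j + 1 : ℕ) : ℝ)] (facesUnion n k (j + 1) (nbrCubes n k (cubeFace n k₀ c₀ A₀ ε₀)))
      ≤ μH[((j + 1 : ℕ) : ℝ)] (facesUnion n k (j + 1) 𝒞) := measure_mono (facesUnion_mono hsub)
    _ ≤ 𝒞.card * 4 ^ n * ((NNReal.sqrt n : ℝ≥0∞) * 2⁻¹ ^ k) ^ (j + 1) :=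
        measure_facesUnion_le _ 𝒞 fun c A ε hA => hA ▸ hausdorffMeasure_cubeFace_le c A ε
    _ ≤ (5 * 2 ^ k) ^ j * 4 ^ n * 4 ^ n * ((NNReal.sqrt n : ℝ≥0∞) * 2⁻¹ ^ k) ^ (j + 1) := by
        gcongr
    _ = 5 ^ j * 16 ^ n * (NNReal.sqrt n : ℝ≥0∞) ^ (j + 1) * 2⁻¹ ^ k * (2 ^ k * 2⁻¹ ^ k) ^ j := by
        rw [show (16 : ℝ≥0∞) ^ n = 4 ^ n * 4 ^ n by rw [← mul_pow]; norm_num]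
        ring
    _ = 5 ^ j * 16 ^ n * (NNReal.sqrt n : ℝ≥0∞) ^ (j + 1) * 2⁻¹ ^ k := by
        rw [hcancel, one_pow, mul_one]

theorem tendsto_hausdorffMeasure_facesUnion_nbrCubes_cubeFace (c₀ : Fin n → ℤ)
    (A₀ : Finset (Fin n)) (ε₀ : Fin n → Bool) :
    Tendsto (fun k => μH[((A₀.card + 1 : ℕ) : ℝ)]
      (facesUnion n k (A₀.card + 1) (nbrCubes n k (cubeFace n k₀ c₀ A₀ ε₀)))) atTop (nhds 0) := by
  have hC : 5 ^ A₀.card * 16 ^ n * (NNReal.sqrt n : ℝ≥0∞) ^ (A₀.card + 1) ≠ ⊤ := by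
    finiteness
  have hgeom := ENNReal.Tendsto.const_mul
    (ENNReal.tendsto_pow_atTop_nhds_zero_of_lt_one (by norm_num : (2⁻¹ : ℝ≥0∞) < 1))
    (Or.inr hC)
  rw [mul_zero] at hgeom
  exact tendsto_of_tendsto_of_tendsto_of_le_of_le' tendsto_const_nhds hgeom
    (Eventually.of_forall fun _ => zero_le) <| eventually_atTop.2
      ⟨k₀, fun _ hk => hausdorffMeasure_facesUnion_nbrCubes_cubeFace_le hk c₀ A₀ ε₀⟩

end CoarseFace

theorem statement9_general {n d : ℕ} (hd : 0 < d) (bdry : Set (Euc n)) (k₀ : ℕ)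
    (hcomp : IsCompact bdry)
    (hskel : bdry ⊆ dyadicSkeleton n k₀ (d - 1)) :
    Tendsto (fun k => μH[(d:ℝ)] (facesUnion n k d (nbrCubes n k bdry))) atTop (nhds 0) := by
  obtain ⟨j, rfl⟩ : ∃ j, d = j + 1 := ⟨d - 1, (Nat.sub_add_cancel hd).symm⟩
  rw [Nat.add_sub_cancel] at hskel
  obtain ⟨T, hTcard, hcover⟩ := exists_finset_cubeFace_cover hcomp.isBounded hskel
  have hsum : Tendsto (fun k => ∑ t ∈ T, μH[((j + 1 : ℕ) : ℝ)]
      (facesUnion n k (j + 1) (nbrCubes n k (cubeFace n k₀ t.1 t.2.1 t.2.2)))) atTop (nhds 0) := by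
    have := tendsto_finsetSum T fun t ht => by
      simpa only [hTcard t ht] using
        tendsto_hausdorffMeasure_facesUnion_nbrCubes_cubeFace (k₀ := k₀) t.1 t.2.1 t.2.2
    rwa [Finset.sum_const_zero] at this
  exact tendsto_of_tendsto_of_tendsto_of_le_of_le tendsto_const_nhds hsum
    (fun _ => zero_le) fun k =>
      (measure_mono (facesUnion_nbrCubes_subset_biUnion hcover)).trans
        (measure_biUnion_finset_le _ _)

/-- Proposition 4.4, 1°. Let `∂E₀ ⊆ ℝⁿ` be a compact `(d-1)`-rectifiable
set with finite `H^{d-1}` measure, contained in the dyadic `(d-1)`-skeleton `|Δ_{k₀,d-1}|`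
for some `k₀`. With `R_k` the family of cubes of `Δ_k` touching some cube of `Δ_k` meeting
`∂E₀`, and `T_{k,d}` the union of the `d`-faces of the cubes of `R_k`, one has
`H^d(T_{k,d}) → 0` as `k → ∞`. -/
theorem statement9 {n d : ℕ} (hd : 0 < d) (bdry : Set (Euc n)) (k₀ : ℕ)
    (hcomp : IsCompact bdry) (hrect : IsHRectifiable (d - 1) bdry)
    (hfin : μH[((d - 1 : ℕ) : ℝ)] bdry < ⊤)
    (hskel : bdry ⊆ dyadicSkeleton n k₀ (d - 1)) :
    Tendsto (fun k => μH[(d:ℝ)] (facesUnion n k d (nbrCubes n k bdry))) atTop (nhds 0) :=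
  statement9_general hd bdry k₀ hcomp hskel
end
end
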